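/- Let H be a connected simple graph and let K₂ ⊙ H be the graph with vertex set {a,b} × V(H) in which (a, y₁) is adjacent to (b, y₂) whenever y₁ = y₂ or y₁y₂ ∈ E(H), and there are no other edges. Let S be an edge-cut of K₂ ⊙ H such that the vertices of {a} × V(H) do not all lie in one component of (K₂ ⊙ H) − S, and likewise the vertices of {b} × V(H) do not all lie in one component. Then |S| ≥ 2·λ(H). -/

import Mathlib

/-- The strong product of two simple graphs. -/
def strongProd {α β : Type*} (G : SimpleGraph α) (H : SimpleGraph β) :
    SimpleGraph (α × β) where
  Adj x y := (x.1 = y.1 ∧ H.Adj x.2 y.2) ∨ (x.2 = y.2 ∧ G.Adj x.1 y.1) ∨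
    (G.Adj x.1 y.1 ∧ H.Adj x.2 y.2)
  symm := by
    constructor
    rintro ⟨a₁, a₂⟩ ⟨b₁, b₂⟩ (⟨h1, h2⟩ | ⟨h1, h2⟩ | ⟨h1, h2⟩)
    · exact Or.inl ⟨h1.symm, h2.symm⟩
    · exact Or.inr (Or.inl ⟨h1.symm, h2.symm⟩)
    · exact Or.inr (Or.inr ⟨h1.symm, h2.symm⟩)
  loopless := by
    constructor
    rintro ⟨a₁, a₂⟩ (⟨_, h⟩ | ⟨_, h⟩ | ⟨h, _⟩)
    · exact H.irrefl h
    · exact G.irrefl h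
    · exact G.irrefl h

/-- The degree of a vertex. -/
noncomputable def deg {α : Type*} (G : SimpleGraph α) (v : α) : ℕ := (G.neighborSet v).ncard

/-- The minimum degree `δ(G)`. -/
noncomputable def minDeg {α : Type*} (G : SimpleGraph α) : ℕ := sInf {d | ∃ v, d = deg G v}

/-- The number of edges `e(G)`. -/
noncomputable def numEdges {α : Type*} (G : SimpleGraph α) : ℕ := G.edgeSet.ncard

/-- The minimum edge-degree `ξ(G) = min {d(u) + d(v) - 2 : uv ∈ E(G)}`. -/
noncomputable def minEdgeDeg {α : Type*} (G : SimpleGraph α) : ℕ :=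
  sInf {d | ∃ u v, G.Adj u v ∧ d = deg G u + deg G v - 2}

/-- The edge-connectivity `λ(G)`. -/
noncomputable def edgeConn {α : Type*} (G : SimpleGraph α) : ℕ :=
  sInf {k | ∃ S : Set (Sym2 α), S ⊆ G.edgeSet ∧ S.ncard = k ∧
    ¬ (G.deleteEdges S).Connected}

/-- `S` is a restricted edge-cut of `G`: deleting `S` disconnects `G` and every
component of `G - S` has at least two vertices. -/
def IsRestrictedEdgeCut {α : Type*} (G : SimpleGraph α) (S : Set (Sym2 α)) : Prop :=
  S ⊆ G.edgeSet ∧ ¬ (G.deleteEdges S).Connected ∧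
    ∀ v : α, 2 ≤ ((G.deleteEdges S).connectedComponentMk v).supp.ncard

/-- The restricted edge-connectivity `λ'(G)`. -/
noncomputable def restEdgeConn {α : Type*} (G : SimpleGraph α) : ℕ :=
  sInf {k | ∃ S : Set (Sym2 α), IsRestrictedEdgeCut G S ∧ S.ncard = k}

/-- `G` is super restricted edge-connected: every minimum restricted edge-cut
isolates an edge, i.e. some component of `G - S` has exactly two vertices. -/
def SuperRestrictedEdgeConnected {α : Type*} (G : SimpleGraph α) : Prop :=
  ∀ S : Set (Sym2 α), IsRestrictedEdgeCut G S → S.ncard = restEdgeConn G →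
    ∃ v : α, ((G.deleteEdges S).connectedComponentMk v).supp.ncard = 2

/-- The set `[X, Y]_G` of edges of `G` with one end in `X` and the other in `Y`. -/
def edgesBetween {α : Type*} (G : SimpleGraph α) (X Y : Set α) : Set (Sym2 α) :=
  {e | e ∈ G.edgeSet ∧ ∃ u ∈ X, ∃ v ∈ Y, e = s(u, v)}

/-- The graph `K₂ ⊙ H`: vertex set `{a,b} × V(H)` (here `Bool × V(H)`), with
`(a, y₁)` adjacent to `(b, y₂)` iff `a ≠ b` and (`y₁ = y₂` or `y₁y₂ ∈ E(H)`). -/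
def K2odot {α : Type*} (H : SimpleGraph α) : SimpleGraph (Bool × α) where
  Adj x y := x.1 ≠ y.1 ∧ (x.2 = y.2 ∨ H.Adj x.2 y.2)
  symm := by
    constructor
    rintro ⟨a, x⟩ ⟨b, y⟩ ⟨h1, h2⟩
    exact ⟨h1.symm, h2.elim (fun h => Or.inl h.symm) (fun h => Or.inr h.symm)⟩
  loopless := by
    constructor
    rintro ⟨a, x⟩ ⟨h1, _⟩
    exact h1 rfl

/-!
`S` contains the edge boundary of some `X ⊆ V(K₂ ⊙ H)` that is a union of components of
`(K₂ ⊙ H) - S` and splits both layers: a component meeting both layers, or, if there is none,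
a single column `{a, b} × {y}` (then `(K₂ ⊙ H) - S` has no edges at all). If `A`, `B` are the
traces of `X` on the two layers, the boundary of `X` contains a copy of the set of pairs `(x, y)`
with `x ∈ N[y]` and `[x ∈ A] ≠ [y ∈ B]`, and this set has at least `2λ(H)` elements:
* if `A ∩ B` and `(A ∪ B)ᶜ` are nonempty, each edge of `H`, counted in both orientations,
  yields at least as many such pairs as it has crossings with `∂(A ∩ B)` and `∂(A ∪ B)`;
* otherwise (after complementing `A` and `B`) `A` and `B` are disjoint, and for `u ∈ A`, `v ∈ B`
  the neighbourhoods of `u` and `v` inject disjointly into the pairs, so their number is at least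
  `deg u + deg v ≥ 2λ(H)`.
-/

open Finset SimpleGraph

theorem edgesBetween_compl_subset {β : Type*} {G : SimpleGraph β} {S : Set (Sym2 β)} {X : Set β}
    (hX : ∀ u v, (G.deleteEdges S).Adj u v → u ∈ X → v ∈ X) : edgesBetween G X Xᶜ ⊆ S := by
  rintro _ ⟨he, u, hu, v, hv, rfl⟩
  by_contra hS
  exact hv (hX u v (deleteEdges_adj.mpr ⟨he, hS⟩) hu)

section Counting

variable {α : Type*} [Fintype α] [DecidableEq α] (H : SimpleGraph α) [DecidableRel H.Adj]

theorem edgeConn_le_card_interedges_compl {s : Finset α} (hs : s.Nonempty) (hs' : sᶜ.Nonempty) :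
    edgeConn H ≤ #(H.interedges s sᶜ) := by
  set C : Set (Sym2 α) := (fun p : α × α => s(p.1, p.2)) '' ↑(H.interedges s sᶜ)
  have hinj : Set.InjOn (fun p : α × α => s(p.1, p.2)) ↑(H.interedges s sᶜ) := by
    rintro ⟨u, v⟩ huv ⟨u', v'⟩ huv' h
    simp only [mem_coe, mem_interedges_iff, mem_compl] at huv huv'
    grind [Sym2.eq_iff]
  have hC : C ⊆ H.edgeSet := by
    rintro _ ⟨p, hp, rfl⟩
    exact (H.mem_interedges_iff.mp hp).2.2
  have hdisc : ¬ (H.deleteEdges C).Connected := by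
    rintro hconn
    obtain ⟨u, hu⟩ := hs
    obtain ⟨v, hv⟩ := hs'
    obtain ⟨d, -, hd₁, hd₂⟩ :=
      (hconn.preconnected u v).some.exists_boundary_dart (↑s) hu (by simpa using hv)
    exact (deleteEdges_adj.mp d.adj).2
      ⟨(d.fst, d.snd), by simp_all [mem_interedges_iff, (deleteEdges_adj.mp d.adj).1], rfl⟩
  calc edgeConn H ≤ C.ncard := Nat.sInf_le ⟨C, hC, rfl, hdisc⟩
    _ = #(H.interedges s sᶜ) := by rw [hinj.ncard_image, Set.ncard_coe_finset]

theorem edgeConn_le_degree {v w : α} (hvw : v ≠ w) : edgeConn H ≤ H.degree v := by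
  have : H.interedges {v} {v}ᶜ = (H.neighborFinset v).map ⟨(v, ·), Prod.mk_right_injective v⟩ := by
    ext ⟨x, y⟩
    simp only [mem_interedges_iff, mem_singleton, mem_compl, mem_map, mem_neighborFinset,
      Function.Embedding.coeFn_mk, Prod.mk.injEq]
    grind [Adj.ne]
  calc edgeConn H ≤ #(H.interedges {v} {v}ᶜ) :=
        edgeConn_le_card_interedges_compl H (singleton_nonempty v) ⟨w, by simpa using hvw.symm⟩
    _ = H.degree v := by rw [this, card_map, card_neighborFinset_eq_degree]

def crossingPairs (A B : Finset α) : Finset (α × α) :=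
  {p | (p.1 = p.2 ∨ H.Adj p.1 p.2) ∧ (p.1 ∈ A ↔ p.2 ∉ B)}

theorem card_interedges_inter_add_card_interedges_union_le (A B : Finset α) :
    #(H.interedges (A ∩ B) (A ∩ B)ᶜ) + #(H.interedges (A ∪ B) (A ∪ B)ᶜ) ≤
      #(crossingPairs H A B) := by
  set I := H.interedges (A ∩ B) (A ∩ B)ᶜ
  set U := H.interedges (A ∪ B) (A ∪ B)ᶜ
  set Q : Finset (α × α) := {p | H.Adj p.1 p.2 ∧ (p.1 ∈ A ↔ p.2 ∉ B)}
  have hQ : Q ⊆ crossingPairs H A B := by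
    intro p
    simp only [Q, crossingPairs, mem_filter_univ]
    exact And.imp_left Or.inr
  have key : ∀ p : α × α,
      (if p ∈ I then 1 else 0) + (if p ∈ U then 1 else 0) +
        ((if p.swap ∈ I then 1 else 0) + (if p.swap ∈ U then 1 else 0)) ≤
      (if p ∈ Q then 1 else 0) + (if p.swap ∈ Q then 1 else 0) := by
    rintro ⟨x, y⟩
    simp only [I, U, Q, mem_interedges_iff, mem_filter_univ, mem_inter, mem_union, mem_compl,
      Prod.swap_prod_mk, H.adj_comm y x]
    by_cases H.Adj x y <;> by_cases x ∈ A <;> by_cases x ∈ B <;> by_cases y ∈ A <;>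
      by_cases y ∈ B <;> simp [*]
  have swap_sum : ∀ f : α × α → ℕ, ∑ p : α × α, f p.swap = ∑ p, f p :=
    Equiv.sum_comp (Equiv.prodComm α α)
  have : 2 * (#I + #U) ≤ 2 * #Q := by
    calc 2 * (#I + #U)
        = ∑ p, ((if p ∈ I then 1 else 0) + (if p ∈ U then 1 else 0) +
            ((if p.swap ∈ I then 1 else 0) + (if p.swap ∈ U then 1 else 0))) := by
          simp only [sum_add_distrib, swap_sum (fun p => if p ∈ I then 1 else 0),
            swap_sum (fun p => if p ∈ U then 1 else 0), ← card_eq_sum_ite (subset_univ _)]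
          ring
      _ ≤ ∑ p, ((if p ∈ Q then 1 else 0) + (if p.swap ∈ Q then 1 else 0)) :=
          sum_le_sum fun p _ => key p
      _ = 2 * #Q := by
          rw [sum_add_distrib, swap_sum (fun p => if p ∈ Q then 1 else 0),
            ← card_eq_sum_ite (subset_univ _)]
          ring
  have := card_le_card hQ
  omega

theorem degree_add_degree_le_card_crossingPairs {A B : Finset α} (hAB : Disjoint A B)
    {u v : α} (hu : u ∈ A) (hv : v ∈ B) :
    H.degree u + H.degree v ≤ #(crossingPairs H A B) := by
  set f : α → α × α := fun w => (if w ∈ B then w else u, w)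
  set g : α → α × α := fun w => (w, if w ∈ A then w else v)
  have hf : Function.Injective f := fun w w' h => congrArg Prod.snd h
  have hg : Function.Injective g := fun w w' h => congrArg Prod.fst h
  have hAB' := Finset.disjoint_left.mp hAB
  have hdisj : Disjoint ((H.neighborFinset u).image f) ((H.neighborFinset v).image g) := by
    simp only [Finset.disjoint_left, mem_image, mem_neighborFinset, f, g]
    rintro _ ⟨w, hw, rfl⟩ ⟨w', hw', h⟩
    grind [Adj.ne]
  have hsub : (H.neighborFinset u).image f ∪ (H.neighborFinset v).image g ⊆
      crossingPairs H A B := by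
    refine union_subset ?_ ?_ <;> intro q hq <;> obtain ⟨w, hw, rfl⟩ := mem_image.mp hq <;>
      simp only [crossingPairs, mem_filter_univ, f, g] <;> grind [mem_neighborFinset, Adj.symm]
  rw [← card_neighborFinset_eq_degree, ← card_neighborFinset_eq_degree,
    ← card_image_of_injective _ hf, ← card_image_of_injective _ hg,
    ← card_union_of_disjoint hdisj]
  exact card_le_card hsub

theorem two_mul_edgeConn_le_card_crossingPairs_of_disjoint {A B : Finset α} (hAB : Disjoint A B)
    (hA : A.Nonempty) (hB : B.Nonempty) : 2 * edgeConn H ≤ #(crossingPairs H A B) := by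
  obtain ⟨u, hu⟩ := hA
  obtain ⟨v, hv⟩ := hB
  have huv : u ≠ v := fun h => Finset.disjoint_left.mp hAB hu (h ▸ hv)
  calc 2 * edgeConn H ≤ H.degree u + H.degree v := by
        have := edgeConn_le_degree H huv
        have := edgeConn_le_degree H huv.symm
        omega
    _ ≤ #(crossingPairs H A B) := degree_add_degree_le_card_crossingPairs H hAB hu hv

theorem crossingPairs_compl (A B : Finset α) : crossingPairs H Aᶜ Bᶜ = crossingPairs H A B := by
  ext p
  simp only [crossingPairs, mem_filter_univ, mem_compl]
  tauto

theorem two_mul_edgeConn_le_card_crossingPairs {A B : Finset α} (hA : A.Nonempty)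
    (hA' : Aᶜ.Nonempty) (hB : B.Nonempty) (hB' : Bᶜ.Nonempty) :
    2 * edgeConn H ≤ #(crossingPairs H A B) := by
  by_cases hAB : Disjoint A B
  · exact two_mul_edgeConn_le_card_crossingPairs_of_disjoint H hAB hA hB
  by_cases hAB' : Disjoint Aᶜ Bᶜ
  · rw [← crossingPairs_compl]
    exact two_mul_edgeConn_le_card_crossingPairs_of_disjoint H hAB' hA' hB'
  rw [not_disjoint_iff_nonempty_inter] at hAB hAB'
  rw [← compl_union] at hAB'
  have hI := edgeConn_le_card_interedges_compl H hAB
    (hA'.mono (compl_subset_compl.mpr inter_subset_left))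
  have hU := edgeConn_le_card_interedges_compl H (hA.mono subset_union_left) hAB'
  have := card_interedges_inter_add_card_interedges_union_le H A B
  omega

end Counting

section K2odot

variable {α : Type*}

def SplitsLayers (X : Set (Bool × α)) : Prop :=
  ∀ b : Bool, ∃ x₁ x₂ : α, (b, x₁) ∈ X ∧ (b, x₂) ∉ X

theorem card_crossingPairs_le_ncard_edgesBetween [Fintype α] [DecidableEq α]
    (H : SimpleGraph α) [DecidableRel H.Adj] (X : Set (Bool × α)) [DecidablePred (· ∈ X)] :
    #(crossingPairs H {x | (true, x) ∈ X} {y | (false, y) ∈ X}) ≤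
      (edgesBetween (K2odot H) X Xᶜ).ncard := by
  rw [← Set.ncard_coe_finset]
  refine Set.ncard_le_ncard_of_injOn (fun p => s((true, p.1), (false, p.2))) ?_ ?_ (Set.toFinite _)
  · rintro ⟨x, y⟩ hxy
    simp only [crossingPairs, mem_coe, mem_filter_univ] at hxy
    refine ⟨⟨Bool.noConfusion, hxy.1⟩, ?_⟩
    by_cases hx : (true, x) ∈ X
    · exact ⟨_, hx, _, hxy.2.mp hx, rfl⟩
    · exact ⟨_, not_not.mp (mt hxy.2.mpr hx), _, hx, Sym2.eq_swap⟩
  · rintro ⟨x, y⟩ - ⟨x', y'⟩ - h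
    simpa [Sym2.eq_iff] using h

theorem two_mul_edgeConn_le_ncard_edgesBetween_K2odot [Fintype α] (H : SimpleGraph α)
    {X : Set (Bool × α)} (hX : SplitsLayers X) :
    2 * edgeConn H ≤ (edgesBetween (K2odot H) X Xᶜ).ncard := by
  classical
  obtain ⟨x₁, x₂, hx₁, hx₂⟩ := hX true
  obtain ⟨y₁, y₂, hy₁, hy₂⟩ := hX false
  exact (two_mul_edgeConn_le_card_crossingPairs H ⟨x₁, by simpa⟩ ⟨x₂, by simpa⟩
    ⟨y₁, by simpa⟩ ⟨y₂, by simpa⟩).trans (card_crossingPairs_le_ncard_edgesBetween H X)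

theorem exists_adj_closed_splitsLayers {G : SimpleGraph (Bool × α)}
    (hG : ∀ u v, G.Adj u v → u.1 ≠ v.1)
    (h : ∀ b, ∃ y₁ y₂, G.connectedComponentMk (b, y₁) ≠ G.connectedComponentMk (b, y₂)) :
    ∃ X : Set (Bool × α), (∀ u v, G.Adj u v → u ∈ X → v ∈ X) ∧ SplitsLayers X := by
  by_cases hC : ∃ u v, G.connectedComponentMk (true, u) = G.connectedComponentMk (false, v)
  · obtain ⟨u, v, huv⟩ := hC
    set C := G.connectedComponentMk (true, u)
    refine ⟨C.supp, fun p q hpq hp => ?_, fun b => ?_⟩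
    · rw [ConnectedComponent.mem_supp_iff] at hp ⊢
      rw [← hp, ConnectedComponent.connectedComponentMk_eq_of_adj hpq]
    obtain ⟨y₁, y₂, hy⟩ := h b
    obtain ⟨x₁, hx₁⟩ : ∃ x, G.connectedComponentMk (b, x) = C := by
      cases b
      exacts [⟨v, huv.symm⟩, ⟨u, rfl⟩]
    by_cases hy₁ : G.connectedComponentMk (b, y₁) = C
    · exact ⟨x₁, y₂, hx₁, fun hy₂ => hy (hy₁.trans hy₂.symm)⟩
    · exact ⟨x₁, y₁, hx₁, hy₁⟩
  · simp only [not_exists] at hC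
    obtain ⟨y₁, y₂, hy⟩ := h true
    have hne : y₁ ≠ y₂ := fun h => hy (h ▸ rfl)
    refine ⟨{p | p.2 = y₁}, ?_, fun b => ⟨y₁, y₂, rfl, hne.symm⟩⟩
    rintro ⟨b, x⟩ ⟨b', y⟩ hxy
    have hbb' := hG _ _ hxy
    cases b <;> cases b' <;> simp only [ne_eq, not_true_eq_false] at hbb'
    · exact absurd (ConnectedComponent.connectedComponentMk_eq_of_adj hxy).symm (hC y x)
    · exact absurd (ConnectedComponent.connectedComponentMk_eq_of_adj hxy) (hC x y)

end K2odot

theorem two_mul_edgeConn_le_of_K2odot_cut_general {α : Type*} [Fintype α]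
    (H : SimpleGraph α) (S : Set (Sym2 (Bool × α)))
    (ha : ∃ y₁ y₂ : α, ((K2odot H).deleteEdges S).connectedComponentMk (true, y₁) ≠
      ((K2odot H).deleteEdges S).connectedComponentMk (true, y₂))
    (hb : ∃ y₁ y₂ : α, ((K2odot H).deleteEdges S).connectedComponentMk (false, y₁) ≠
      ((K2odot H).deleteEdges S).connectedComponentMk (false, y₂)) :
    2 * edgeConn H ≤ S.ncard := by
  obtain ⟨X, hX, hsplit⟩ := exists_adj_closed_splitsLayers (G := (K2odot H).deleteEdges S)
    (fun u v huv => (deleteEdges_adj.mp huv).1.1) (Bool.forall_bool.mpr ⟨hb, ha⟩)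
  calc 2 * edgeConn H ≤ (edgesBetween (K2odot H) X Xᶜ).ncard :=
        two_mul_edgeConn_le_ncard_edgesBetween_K2odot H hsplit
    _ ≤ S.ncard := Set.ncard_le_ncard (edgesBetween_compl_subset hX) (Set.toFinite S)

theorem two_mul_edgeConn_le_of_K2odot_cut {α : Type*} [Fintype α]
    (H : SimpleGraph α) (hH : H.Connected) (S : Set (Sym2 (Bool × α)))
    (hsub : S ⊆ (K2odot H).edgeSet)
    (hcut : ¬ ((K2odot H).deleteEdges S).Connected)
    (ha : ∃ y₁ y₂ : α, ((K2odot H).deleteEdges S).connectedComponentMk (true, y₁) ≠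
      ((K2odot H).deleteEdges S).connectedComponentMk (true, y₂))
    (hb : ∃ y₁ y₂ : α, ((K2odot H).deleteEdges S).connectedComponentMk (false, y₁) ≠
      ((K2odot H).deleteEdges S).connectedComponentMk (false, y₂)) :
    2 * edgeConn H ≤ S.ncard :=
  two_mul_edgeConn_le_of_K2odot_cut_general H S ha hb
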